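/- For τ ∈ ℝ and finitely supported v, w : ℤ^d → ℂ, let R_τ(v, w) denote the relation: for every k ∈ ℤ^d, w_k = e^{−iτ|k|²} v_k − i(τ/16) e^{−iτ|k|²} Σ_{−k₁+k₂+k₃=k} φ₁(2iτ|k₁|²) · (conj(v_{k₁}) + e^{−iτ|k₁|²} conj(w_{k₁})) (v_{k₂} + e^{iτ|k₂|²} w_{k₂}) (v_{k₃} + e^{iτ|k₃|²} w_{k₃}) − i(τ/16) Σ_{−k₁+k₂+k₃=k} φ₁(−2iτ|k₁|²) · (e^{iτ|k₁|²} conj(v_{k₁}) + conj(w_{k₁})) (e^{−iτ|k₂|²} v_{k₂} + w_{k₂}) (e^{−iτ|k₃|²} v_{k₃} + w_{k₃}). Then R is symmetric: for all τ ∈ ℝ and all finitely supported v, w, R_τ(v, w) holds if and only if R_{−τ}(w, v) holds. -/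

import Mathlib

/-- `φ₁(z) = (exp z - 1)/z` for `z ≠ 0`, `φ₁(0) = 1`. -/
noncomputable def phi1 (z : ℂ) : ℂ := if z = 0 then 1 else (Complex.exp z - 1) / z

/-- `|k|² = k·k` for a frequency `k ∈ ℤ^d`, as a complex number. -/
noncomputable def nsq {d : ℕ} (k : Fin d → ℤ) : ℂ := ∑ i, ((k i : ℂ)) ^ 2

/-- One step of the first-order resonance-based midpoint scheme for the cubic
nonlinear Schrödinger equation on `𝕋^d`, in Fourier coordinates: `nlsMid1R τ v w`
holds iff for every `k ∈ ℤ^d`,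
`w_k = e^{-iτ|k|²} v_k
  - i(τ/16) e^{-iτ|k|²} Σ_{-k₁+k₂+k₃=k} φ₁(2iτ|k₁|²)
      (conj v_{k₁} + e^{-iτ|k₁|²} conj w_{k₁})(v_{k₂} + e^{iτ|k₂|²} w_{k₂})(v_{k₃} + e^{iτ|k₃|²} w_{k₃})
  - i(τ/16) Σ_{-k₁+k₂+k₃=k} φ₁(-2iτ|k₁|²)
      (e^{iτ|k₁|²} conj v_{k₁} + conj w_{k₁})(e^{-iτ|k₂|²} v_{k₂} + w_{k₂})(e^{-iτ|k₃|²} v_{k₃} + w_{k₃})`,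
where the convolution constraint `-k₁+k₂+k₃ = k` has been solved as `k₃ = k + k₁ - k₂`. -/
noncomputable def nlsMid1R {d : ℕ} (τ : ℝ) (v w : (Fin d → ℤ) →₀ ℂ) : Prop :=
  ∀ k : Fin d → ℤ,
    w k = Complex.exp (-(Complex.I * (τ : ℂ) * nsq k)) * v k
      - Complex.I * ((τ : ℂ) / 16) * Complex.exp (-(Complex.I * (τ : ℂ) * nsq k)) *
          (∑ᶠ k₁ : Fin d → ℤ, ∑ᶠ k₂ : Fin d → ℤ,
            phi1 (2 * Complex.I * (τ : ℂ) * nsq k₁) *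
              (((starRingEnd ℂ) (v k₁) +
                  Complex.exp (-(Complex.I * (τ : ℂ) * nsq k₁)) * (starRingEnd ℂ) (w k₁)) *
                (v k₂ + Complex.exp (Complex.I * (τ : ℂ) * nsq k₂) * w k₂) *
                (v (k + k₁ - k₂) +
                  Complex.exp (Complex.I * (τ : ℂ) * nsq (k + k₁ - k₂)) * w (k + k₁ - k₂))))
      - Complex.I * ((τ : ℂ) / 16) *
          (∑ᶠ k₁ : Fin d → ℤ, ∑ᶠ k₂ : Fin d → ℤ,
            phi1 (-(2 * Complex.I * (τ : ℂ) * nsq k₁)) *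
              ((Complex.exp (Complex.I * (τ : ℂ) * nsq k₁) * (starRingEnd ℂ) (v k₁) +
                  (starRingEnd ℂ) (w k₁)) *
                (Complex.exp (-(Complex.I * (τ : ℂ) * nsq k₂)) * v k₂ + w k₂) *
                (Complex.exp (-(Complex.I * (τ : ℂ) * nsq (k + k₁ - k₂))) * v (k + k₁ - k₂) +
                  w (k + k₁ - k₂))))

/-!
Replacing `(τ, v, w)` by `(-τ, w, v)` turns each summand of the first convolution sum of the
scheme into the corresponding summand of the second one and vice versa: the phases
`e^{±iτ|k|²}` and the arguments `±2iτ|k₁|²` of `φ₁` trade places. Hence, with `S₁`, `S₂` the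
two sums for `(τ, v, w)`, `R_{-τ}(w, v)` reads
`v_k = e^{iτ|k|²} w_k + i(τ/16) e^{iτ|k|²} S₂ + i(τ/16) S₁`,
which is `R_τ(v, w)` multiplied by `e^{iτ|k|²}` and rearranged.
-/

theorem eq_sub_sub_iff_eq_add_add {R : Type*} [CommRing R] {e e' a b c S T : R}
    (he : e * e' = 1) :
    b = e' * a - c * e' * S - c * T ↔ a = e * b + c * e * T + c * S := by
  constructor <;> intro h
  · linear_combination (-e) * h + (c * S - a) * he
  · linear_combination (-e') * h - (b + c * T) * he

open Complex

section

variable {d : ℕ}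

noncomputable def convSumPlus (τ : ℝ) (v w : (Fin d → ℤ) →₀ ℂ) (k : Fin d → ℤ) : ℂ :=
  ∑ᶠ k₁ : Fin d → ℤ, ∑ᶠ k₂ : Fin d → ℤ,
    phi1 (2 * I * (τ : ℂ) * nsq k₁) *
      ((starRingEnd ℂ (v k₁) + exp (-(I * (τ : ℂ) * nsq k₁)) * starRingEnd ℂ (w k₁)) *
        (v k₂ + exp (I * (τ : ℂ) * nsq k₂) * w k₂) *
        (v (k + k₁ - k₂) + exp (I * (τ : ℂ) * nsq (k + k₁ - k₂)) * w (k + k₁ - k₂)))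

noncomputable def convSumMinus (τ : ℝ) (v w : (Fin d → ℤ) →₀ ℂ) (k : Fin d → ℤ) : ℂ :=
  ∑ᶠ k₁ : Fin d → ℤ, ∑ᶠ k₂ : Fin d → ℤ,
    phi1 (-(2 * I * (τ : ℂ) * nsq k₁)) *
      ((exp (I * (τ : ℂ) * nsq k₁) * starRingEnd ℂ (v k₁) + starRingEnd ℂ (w k₁)) *
        (exp (-(I * (τ : ℂ) * nsq k₂)) * v k₂ + w k₂) *
        (exp (-(I * (τ : ℂ) * nsq (k + k₁ - k₂))) * v (k + k₁ - k₂) + w (k + k₁ - k₂)))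

theorem nlsMid1R_iff (τ : ℝ) (v w : (Fin d → ℤ) →₀ ℂ) :
    nlsMid1R τ v w ↔ ∀ k : Fin d → ℤ,
      w k = exp (-(I * (τ : ℂ) * nsq k)) * v k
        - I * ((τ : ℂ) / 16) * exp (-(I * (τ : ℂ) * nsq k)) * convSumPlus τ v w k
        - I * ((τ : ℂ) / 16) * convSumMinus τ v w k :=
  Iff.rfl

theorem convSumPlus_neg_swap (τ : ℝ) (v w : (Fin d → ℤ) →₀ ℂ) (k : Fin d → ℤ) :
    convSumPlus (-τ) w v k = convSumMinus τ v w k := by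
  refine finsum_congr fun k₁ => finsum_congr fun k₂ => ?_
  push_cast
  ring_nf

theorem convSumMinus_neg_swap (τ : ℝ) (v w : (Fin d → ℤ) →₀ ℂ) (k : Fin d → ℤ) :
    convSumMinus (-τ) w v k = convSumPlus τ v w k := by
  refine finsum_congr fun k₁ => finsum_congr fun k₂ => ?_
  push_cast
  ring_nf

end

/-- The one-step relation of the first-order resonance-based midpoint NLS scheme is
symmetric: `R_τ(v, w)` holds iff `R_{-τ}(w, v)` holds. -/
theorem nlsMid1R_symmetric {d : ℕ} (τ : ℝ) (v w : (Fin d → ℤ) →₀ ℂ) :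
    nlsMid1R τ v w ↔ nlsMid1R (-τ) w v := by
  rw [nlsMid1R_iff, nlsMid1R_iff]
  refine forall_congr' fun k => ?_
  have hphase : exp (I * τ * nsq k) * exp (-(I * τ * nsq k)) = 1 := by
    rw [exp_neg]; exact mul_inv_cancel₀ (exp_ne_zero _)
  rw [convSumPlus_neg_swap, convSumMinus_neg_swap]
  simp only [ofReal_neg, neg_div, mul_neg, neg_mul, neg_neg, sub_neg_eq_add]
  exact eq_sub_sub_iff_eq_add_add hphase
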